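/- Suppose Θ is a Polish space (e.g. a Borel subset of ℝ^n with its subspace topology), p is a Borel probability measure on Θ, g : Θ → ℝ^m is Borel measurable, and there exists a Borel restricted domain Θ_max of maximal probability, i.e. p(Θ_max) ≥ p(S) for every Borel restricted domain S. Then there exists a set Θ' ⊆ Θ, measurable with respect to the completion of p, such that g is injective on Θ', p(Θ') = p(Θ_max), and g(Θ') = g(Θ); in particular p({θ ∈ Θ : g(θ) ∉ g(Θ')}) = 0, i.e. the image of this largest restricted domain equals the full response set g(Θ) up to a set of zero probability. -/

import Mathlib

/-!
Borel sets on which `g` is injective and whose images avoid `g '' Θmax` are `p`-null, by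
maximality of `Θmax`. Refining the Polish topology so that `g` and a Borel embedding `φ` of `Θ`
into `ℝ` become continuous, such sets are easy to produce: in a compact set `K`, the points that
minimise `φ` on their fibre form a Borel set on which `g` is injective and which has the image of
`K`. Exhausting `g ⁻¹' (g '' Θmax)ᶜ` by countably many compact sets up to a null set thus gives a
null set `N` whose image contains every value of `g` outside `g '' Θmax`. Adding to `Θmax` one
point of `N` over each such value yields `Θ'`: it need not be Borel, but it differs from `Θmax` by
a subset of a null set.
-/

open MeasureTheory Set Filter
open scoped ENNReal

lemma MeasurableSet.exists_isCompact_measure_sdiff_iUnion_eq_zero {X : Type*}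
    [TopologicalSpace X] [T2Space X] [MeasurableSpace X] [OpensMeasurableSpace X]
    (μ : Measure X) [μ.InnerRegularCompactLTTop] {B : Set X} (hB : MeasurableSet B)
    (hμB : μ B ≠ ∞) :
    ∃ K : ℕ → Set X, (∀ n, K n ⊆ B ∧ IsCompact (K n)) ∧ μ (B \ ⋃ n, K n) = 0 := by
  have hK (n : ℕ) : ∃ K ⊆ B, IsCompact K ∧ μ (B \ K) < (n : ℝ≥0∞)⁻¹ :=
    hB.exists_isCompact_sdiff_lt hμB (ENNReal.inv_ne_zero.2 (ENNReal.natCast_ne_top n))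
  choose K hKB hKc hKμ using hK
  refine ⟨K, fun n => ⟨hKB n, hKc n⟩, le_antisymm ?_ bot_le⟩
  refine ge_of_tendsto' ENNReal.tendsto_inv_nat_nhds_zero fun n => ?_
  exact (measure_mono (sdiff_subset_sdiff_right (subset_iUnion K n))).trans (hKμ n).le

/-- The points of `K` minimising `φ` on their `g`-fibre form a Borel set: a point is not such a
minimiser iff some rational `q` separates its `φ`-value from that of a point of `K` in its fibre,
and for fixed `q` this is an open condition intersected with the preimage of a compact set. -/
lemma IsCompact.exists_measurableSet_injOn_image_eq {X Y : Type*} [TopologicalSpace X]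
    [T2Space X] [MeasurableSpace X] [OpensMeasurableSpace X] [TopologicalSpace Y] [T2Space Y]
    {g : X → Y} (hg : Continuous g) {φ : X → ℝ} (hφ : Continuous φ)
    (hφ_inj : Function.Injective φ) {K : Set X} (hK : IsCompact K) :
    ∃ S ⊆ K, MeasurableSet S ∧ InjOn g S ∧ g '' S = g '' K := by
  set Bad : Set X := ⋃ q : ℚ, φ ⁻¹' Ioi (q : ℝ) ∩ g ⁻¹' (g '' (K ∩ φ ⁻¹' Iic (q : ℝ)))
  have hBad {a b : X} (hb : b ∈ K) (hab : g a = g b) (hφab : φ b < φ a) : a ∈ Bad := by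
    obtain ⟨q, hbq, hqa⟩ := exists_rat_btwn hφab
    exact mem_iUnion.2 ⟨q, hqa, b, ⟨hb, hbq.le⟩, hab.symm⟩
  refine ⟨K \ Bad, sdiff_subset, hK.isClosed.measurableSet.diff ?_, ?_, ?_⟩
  · refine MeasurableSet.iUnion fun q => (isOpen_Ioi.preimage hφ).measurableSet.inter ?_
    exact ((hK.inter_right (isClosed_Iic.preimage hφ)).image hg).isClosed.preimage hg
      |>.measurableSet
  · intro a ha b hb hab
    refine hφ_inj (le_antisymm ?_ ?_)
    · exact not_lt.1 fun h => ha.2 (hBad hb.1 hab h)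
    · exact not_lt.1 fun h => hb.2 (hBad ha.1 hab.symm h)
  · refine (image_mono sdiff_subset).antisymm ?_
    rintro _ ⟨a, ha, rfl⟩
    obtain ⟨x, ⟨hxK, hxa⟩, hx_min⟩ :=
      (hK.inter_right (isClosed_singleton.preimage hg)).exists_isMinOn ⟨a, ha, rfl⟩ hφ.continuousOn
    refine ⟨x, ⟨hxK, fun hx => ?_⟩, hxa⟩
    obtain ⟨q, hxq, b, ⟨hbK, hbq⟩, hbx⟩ := mem_iUnion.1 hx
    have : φ x ≤ φ b := hx_min ⟨hbK, hbx.trans hxa⟩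
    exact (lt_irrefl _) (hxq.trans_le (this.trans hbq))

lemma exists_subset_measure_eq_zero_image_superset_of_continuous {X Y : Type*}
    [TopologicalSpace X] [T2Space X] [MeasurableSpace X] [OpensMeasurableSpace X]
    [TopologicalSpace Y] [T2Space Y] (μ : Measure X) [μ.InnerRegularCompactLTTop]
    {g : X → Y} (hg : Continuous g) {φ : X → ℝ} (hφ : Continuous φ)
    (hφ_inj : Function.Injective φ) {B : Set X} (hB : MeasurableSet B) (hμB : μ B ≠ ∞)
    (hnull : ∀ S ⊆ B, MeasurableSet S → InjOn g S → μ S = 0) :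
    ∃ N ⊆ B, μ N = 0 ∧ g '' B ⊆ g '' N := by
  obtain ⟨K, hK, hμK⟩ := hB.exists_isCompact_measure_sdiff_iUnion_eq_zero μ hμB
  have hS (n : ℕ) := (hK n).2.exists_measurableSet_injOn_image_eq hg hφ hφ_inj
  choose S hSK hSm hS_inj hS_img using hS
  refine ⟨(B \ ⋃ n, K n) ∪ ⋃ n, S n, ?_, ?_, ?_⟩
  · exact union_subset sdiff_subset (iUnion_subset fun n => (hSK n).trans (hK n).1)
  · exact measure_union_null hμK <| measure_iUnion_null fun n =>
      hnull _ ((hSK n).trans (hK n).1) (hSm n) (hS_inj n)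
  · rintro _ ⟨a, ha, rfl⟩
    by_cases haK : a ∈ ⋃ n, K n
    · obtain ⟨n, hn⟩ := mem_iUnion.1 haK
      obtain ⟨b, hb, hba⟩ : g a ∈ g '' S n := hS_img n ▸ mem_image_of_mem g hn
      exact ⟨b, Or.inr (mem_iUnion.2 ⟨n, hb⟩), hba⟩
    · exact ⟨a, Or.inl ⟨ha, haK⟩, rfl⟩

/-- A finer Polish topology making `g` and a Borel embedding into `ℝ` continuous has the same
Borel sets, so the continuous case applies. -/
lemma exists_subset_measure_eq_zero_image_superset {X Y : Type*}
    [TopologicalSpace X] [PolishSpace X] [MeasurableSpace X] [BorelSpace X]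
    [TopologicalSpace Y] [T2Space Y] [SecondCountableTopology Y] [MeasurableSpace Y]
    [OpensMeasurableSpace Y] (μ : Measure X) [IsFiniteMeasure μ]
    {g : X → Y} (hg : Measurable g) {B : Set X} (hB : MeasurableSet B)
    (hnull : ∀ S ⊆ B, MeasurableSet S → InjOn g S → μ S = 0) :
    ∃ N ⊆ B, μ N = 0 ∧ g '' B ⊆ g '' N := by
  obtain ⟨φ, hφ⟩ := exists_measurableEmbedding_real X
  obtain ⟨t', ht', hcont, hpolish⟩ := (hg.prodMk hφ.measurable).exists_continuous
  have : @BorelSpace X t' _ :=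
    ⟨BorelSpace.measurable_eq.trans (borel_eq_borel_of_le hpolish ‹_› ht').symm⟩
  let := t'
  exact exists_subset_measure_eq_zero_image_superset_of_continuous μ hcont.fst hcont.snd
    hφ.injective hB (measure_ne_top μ B) hnull

lemma measure_eq_zero_of_injOn_of_maximal {X Y : Type*} [MeasurableSpace X] {μ : Measure X}
    {g : X → Y} {M : Set X} (hM : MeasurableSet M) (hμM : μ M ≠ ∞) (hM_inj : InjOn g M)
    (hmax : ∀ S : Set X, MeasurableSet S → InjOn g S → μ S ≤ μ M) {S : Set X}
    (hSM : S ⊆ g ⁻¹' (g '' M)ᶜ) (hS : MeasurableSet S) (hS_inj : InjOn g S) : μ S = 0 := by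
  have hdisj : ∀ x ∈ M, ∀ y ∈ S, g x ≠ g y := fun x hx y hy hxy => hSM hy ⟨x, hx, hxy⟩
  have hMS : Disjoint M S :=
    disjoint_left.2 fun x hxM hxS => hdisj x hxM x hxS rfl
  have h := hmax (M ∪ S) (hM.union hS) ((injOn_union hMS).2 ⟨hM_inj, hS_inj, hdisj⟩)
  rw [measure_union hMS hS] at h
  exact nonpos_iff_eq_zero.1 (ENNReal.le_of_add_le_add_left hμM (h.trans_eq (add_zero _).symm))

/-- If `Θ` is a Polish space, `p` a Borel probability measure on it, `g` Borel measurable, and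
`Θmax` is a Borel restricted domain of maximal probability (a Borel set on which `g` is
injective, with `p Θmax ≥ p S` for every Borel set `S` with `g` injective on `S`), then there
is a set `Θ'` (measurable for the completion of `p`, i.e. null-measurable) with `g` injective
on `Θ'`, `p Θ' = p Θmax`, and `g '' Θ' = g '' univ = range g`; in particular
`p {θ : g θ ∉ g '' Θ'} = 0`, i.e. the image of this largest restricted domain is the full
response set up to a `p`-null set. -/
theorem image_of_largest_restricted_domain_is_full {m : ℕ}
    (Θ : Type*) [TopologicalSpace Θ] [PolishSpace Θ] [MeasurableSpace Θ] [BorelSpace Θ]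
    (p : Measure Θ) [IsProbabilityMeasure p]
    (g : Θ → EuclideanSpace ℝ (Fin m)) (hg : Measurable g)
    (Θmax : Set Θ) (hmeas : MeasurableSet Θmax) (hinj : Set.InjOn g Θmax)
    (hmaximal : ∀ S : Set Θ, MeasurableSet S → Set.InjOn g S → p S ≤ p Θmax) :
    ∃ Θ' : Set Θ, NullMeasurableSet Θ' p ∧ Set.InjOn g Θ' ∧ p Θ' = p Θmax ∧
      g '' Θ' = Set.range g ∧ p {θ | g θ ∉ g '' Θ'} = 0 := by
  set B := g ⁻¹' (g '' Θmax)ᶜ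
  have hB : MeasurableSet B := hg (hmeas.image_of_measurable_injOn hg hinj).compl
  obtain ⟨N, hNB, hN, hBN⟩ := exists_subset_measure_eq_zero_image_superset p hg hB
    fun S hSB hS hS_inj => measure_eq_zero_of_injOn_of_maximal hmeas (measure_ne_top p _) hinj
      hmaximal hSB hS hS_inj
  obtain ⟨T, hTN, hT⟩ := exists_subset_bijOn N g
  have hT_null : p T = 0 := measure_mono_null hTN hN
  have hdisj : ∀ x ∈ Θmax, ∀ y ∈ T, g x ≠ g y := fun x hx y hy hxy => hNB (hTN hy) ⟨x, hx, hxy⟩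
  have himage : g '' (Θmax ∪ T) = range g := by
    refine (image_subset_range _ _).antisymm ?_
    rintro _ ⟨θ, rfl⟩
    by_cases hθ : g θ ∈ g '' Θmax
    · exact image_mono subset_union_left hθ
    · exact image_mono subset_union_right (hT.image_eq ▸ hBN (mem_image_of_mem g hθ))
  refine ⟨Θmax ∪ T, hmeas.nullMeasurableSet.union (.of_null hT_null), ?_,
    measure_congr (union_ae_eq_left_of_ae_eq_empty (ae_eq_empty.2 hT_null)), himage, ?_⟩
  · exact (injOn_union (disjoint_left.2 fun x hx hxT => hdisj x hx x hxT rfl)).2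
      ⟨hinj, hT.injOn, hdisj⟩
  · simp [himage]
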